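/- Let m, n be positive integers and G a graph on m+n vertices such that G is not of the form K_{r,s} + tK_1 for any positive integers r, s and non-negative integer t. If λ_2(G) ≤ √2 − 1, then σ(G, K_{m,n}) ≥ 1. -/

import Mathlib

open SimpleGraph Finset

/-- Adjacency matrix over `ℝ` (classical decidability). -/
noncomputable def adjMatR {n : ℕ} (G : SimpleGraph (Fin n)) : Matrix (Fin n) (Fin n) ℝ :=
  @SimpleGraph.adjMatrix ℝ (Fin n) G (Classical.decRel _) _ _

lemma adjMatR_isHermitian {n : ℕ} (G : SimpleGraph (Fin n)) : (adjMatR G).IsHermitian := by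
  have h : (adjMatR G).IsSymm := @SimpleGraph.isSymm_adjMatrix ℝ (Fin n) G (Classical.decRel _) _ _
  exact (Matrix.conjTranspose_eq_transpose_of_trivial _).trans h

/-- Multiset of adjacency eigenvalues (with multiplicity). -/
noncomputable def specMS {n : ℕ} (G : SimpleGraph (Fin n)) : Multiset ℝ :=
  Finset.univ.val.map (adjMatR_isHermitian G).eigenvalues

/-- `i`-th largest adjacency eigenvalue (0-indexed). -/
noncomputable def eigval {n : ℕ} (G : SimpleGraph (Fin n)) (i : ℕ) : ℝ :=
  ((specMS G).sort (· ≥ ·)).getD i 0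

/-- Graph energy. -/
noncomputable def energy {n : ℕ} (G : SimpleGraph (Fin n)) : ℝ :=
  ((specMS G).map (fun x => |x|)).sum

/-- ℓ¹ spectral distance. -/
noncomputable def specDist {n : ℕ} (G H : SimpleGraph (Fin n)) : ℝ :=
  ∑ i ∈ Finset.range n, |eigval G i - eigval H i|

/-- number of edges -/
noncomputable def numEdges {n : ℕ} (G : SimpleGraph (Fin n)) : ℕ := G.edgeSet.ncard

/-- `K_2 + (n-2)K_1`: one edge plus isolated vertices. -/
def oneEdgeG (n : ℕ) : SimpleGraph (Fin n) :=
  SimpleGraph.fromRel (fun u v => (u : ℕ) = 0 ∧ (v : ℕ) = 1)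

/-- `P_3 + (n-3)K_1`: a path on 3 vertices plus isolated vertices. -/
def path3G (n : ℕ) : SimpleGraph (Fin n) :=
  SimpleGraph.fromRel (fun u v => ((u : ℕ) = 0 ∧ (v : ℕ) = 1) ∨ ((u : ℕ) = 1 ∧ (v : ℕ) = 2))

/-- Complete bipartite graph `K_{a,b}` on `Fin (a+b)`. -/
def compBip (a b : ℕ) : SimpleGraph (Fin (a + b)) :=
  SimpleGraph.fromRel (fun u v => (u : ℕ) < a ∧ a ≤ (v : ℕ))

/-- `K_{r,s} + tK_1`: complete bipartite plus `t` isolated vertices. -/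
def compBipPlus (r s t : ℕ) : SimpleGraph (Fin (r + s + t)) :=
  SimpleGraph.fromRel (fun u v => (u : ℕ) < r ∧ r ≤ (v : ℕ) ∧ (v : ℕ) < r + s)

/-- `K_1 + K_{n-1}`: an isolated vertex plus a complete graph. -/
def k1PlusComplete (n : ℕ) : SimpleGraph (Fin n) :=
  SimpleGraph.fromRel (fun u v => (u : ℕ) ≠ 0 ∧ (v : ℕ) ≠ 0)

/-- `(K_1 + K_2) ∇ (n-3)K_1`: join of `K_1 + K_2` with `n-3` isolated vertices. -/
def k1k2JoinEmpty (n : ℕ) : SimpleGraph (Fin n) :=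
  SimpleGraph.fromRel (fun u v =>
    ((u : ℕ) = 1 ∧ (v : ℕ) = 2) ∨ ((u : ℕ) < 3 ∧ 3 ≤ (v : ℕ)))

/-!
Courant–Fischer in counting form: if the adjacency form `x ⬝ᵥ A *ᵥ x` is at least `c * (x ⬝ᵥ x)`
on a `k`-dimensional subspace, then at least `k` eigenvalues are at least `c` (and dually).
Test vectors supported on an induced subgraph give `λ₁ ≥ 1` for every graph with an edge,
`λ₂ ≥ 1/2 > √2 - 1` for every graph with an induced `P₄` or `2K₂`, and two eigenvalues `≤ -1`
for every graph with a triangle; the form of `K_{m,n}` vanishes on a hyperplane, so all its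
eigenvalues but the smallest are `≥ 0`. Hence if `G` is edgeless the largest eigenvalues of `G`
and `K_{m,n}` differ by at least `1`, and if `G` has a triangle the second smallest ones do.
Otherwise `G` has an edge, no triangle and (by the bound on `λ₂`) no induced `P₄` or `2K₂`;
such a graph is `K_{r,s} + tK_1`, with the parts `N(a)` and `N(b) \ N(a)` for an edge `ab`.
-/

open Module Matrix

lemma finrank_le_card_of_forall_sum_nonneg {ι V : Type*} [Fintype ι] [AddCommGroup V]
    [Module ℝ V] (S : Submodule ℝ V) (g : V →ₗ[ℝ] ι → ℝ) (hg : Function.Injective g)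
    (d : ι → ℝ) (hS : ∀ x ∈ S, 0 ≤ ∑ i, d i * g x i ^ 2) :
    finrank ℝ S ≤ #{i | 0 ≤ d i} := by
  classical
  let restrict : S →ₗ[ℝ] {i // 0 ≤ d i} → ℝ :=
    LinearMap.funLeft ℝ ℝ Subtype.val ∘ₗ g ∘ₗ S.subtype
  have hinj : Function.Injective restrict := by
    refine (injective_iff_map_eq_zero restrict).mpr fun ⟨x, hx⟩ h0 => ?_
    have hzero : ∀ i, 0 ≤ d i → g x i = 0 := fun i hi => congrFun h0 ⟨i, hi⟩
    have hterm : ∀ i ∈ univ, d i * g x i ^ 2 ≤ 0 := fun i _ => by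
      by_cases hi : 0 ≤ d i
      · simp [hzero i hi]
      · exact mul_nonpos_of_nonpos_of_nonneg (by linarith) (sq_nonneg _)
    have hsum := (sum_eq_zero_iff_of_nonpos hterm).mp (le_antisymm (sum_nonpos hterm) (hS x hx))
    have hgx : g x = 0 := funext fun i => by
      by_cases hi : 0 ≤ d i
      · exact hzero i hi
      · simpa [(show d i ≠ 0 by linarith)] using hsum i (mem_univ i)
    exact Subtype.ext (hg (hgx.trans (map_zero g).symm))
  simpa [Fintype.card_subtype] using LinearMap.finrank_le_finrank_of_injective hinj

namespace Matrix.IsHermitian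

variable {n : Type*} [Fintype n] [DecidableEq n] {A : Matrix n n ℝ} (hA : A.IsHermitian)

lemma dotProduct_mulVec_eq_sum (x : n → ℝ) :
    x ⬝ᵥ A *ᵥ x =
      ∑ i, hA.eigenvalues i * (star (hA.eigenvectorUnitary : Matrix n n ℝ) *ᵥ x) i ^ 2 := by
  conv_lhs => rw [hA.spectral_theorem, Unitary.conjStarAlgAut_apply]
  rw [← mulVec_mulVec, ← mulVec_mulVec, dotProduct_mulVec, ← mulVec_transpose]
  simp [dotProduct, mulVec_diagonal, star_eq_conjTranspose, conjTranspose_eq_transpose_of_trivial,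
    sq, mul_left_comm]

lemma eigenvectorUnitary_mulVec_star_mulVec (x : n → ℝ) :
    (hA.eigenvectorUnitary : Matrix n n ℝ) *ᵥ (star (hA.eigenvectorUnitary : Matrix n n ℝ) *ᵥ x)
      = x := by
  rw [mulVec_mulVec, mem_unitaryGroup_iff.mp hA.eigenvectorUnitary.2, one_mulVec]

lemma injective_star_eigenvectorUnitary_mulVecLin :
    Function.Injective (star (hA.eigenvectorUnitary : Matrix n n ℝ)).mulVecLin :=
  Function.LeftInverse.injective hA.eigenvectorUnitary_mulVec_star_mulVec

lemma dotProduct_self_eq_sum (x : n → ℝ) :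
    x ⬝ᵥ x = ∑ i, (star (hA.eigenvectorUnitary : Matrix n n ℝ) *ᵥ x) i ^ 2 := by
  set U : Matrix n n ℝ := (hA.eigenvectorUnitary : Matrix n n ℝ)
  have hUU : Uᵀ * U = 1 := by
    simpa [star_eq_conjTranspose, conjTranspose_eq_transpose_of_trivial] using
      mem_unitaryGroup_iff'.mp hA.eigenvectorUnitary.2
  conv_lhs => rw [← hA.eigenvectorUnitary_mulVec_star_mulVec x]
  rw [dotProduct_mulVec, ← mulVec_transpose, mulVec_mulVec, hUU, one_mulVec]
  simp [U, dotProduct, sq]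

variable {S : Submodule ℝ (n → ℝ)} {c : ℝ}

lemma finrank_le_card_le_eigenvalues (hS : ∀ x ∈ S, c * (x ⬝ᵥ x) ≤ x ⬝ᵥ A *ᵥ x) :
    finrank ℝ S ≤ #{i | c ≤ hA.eigenvalues i} := by
  simpa [sub_nonneg] using finrank_le_card_of_forall_sum_nonneg S _
    hA.injective_star_eigenvectorUnitary_mulVecLin (fun i => hA.eigenvalues i - c) fun x hx => by
      have := hS x hx
      rw [hA.dotProduct_mulVec_eq_sum, hA.dotProduct_self_eq_sum, mul_sum] at this
      simpa [sub_mul, sum_sub_distrib] using this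

lemma finrank_le_card_eigenvalues_le (hS : ∀ x ∈ S, x ⬝ᵥ A *ᵥ x ≤ c * (x ⬝ᵥ x)) :
    finrank ℝ S ≤ #{i | hA.eigenvalues i ≤ c} := by
  simpa [sub_nonneg] using finrank_le_card_of_forall_sum_nonneg S _
    hA.injective_star_eigenvectorUnitary_mulVecLin (fun i => c - hA.eigenvalues i) fun x hx => by
      have := hS x hx
      rw [hA.dotProduct_mulVec_eq_sum, hA.dotProduct_self_eq_sum, mul_sum] at this
      simpa [sub_mul, sum_sub_distrib] using this

lemma card_filter_eigenvalues (p : ℝ → Prop) [DecidablePred p] :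
    #{i | p (hA.eigenvalues i)} = #{j | p (hA.eigenvalues₀ j)} :=
  card_equiv (Fintype.equivOfCardEq (Fintype.card_fin _)).symm fun i => by
    simp only [mem_filter, mem_univ, true_and]
    rfl

lemma le_eigenvalues₀ (hS : ∀ x ∈ S, c * (x ⬝ᵥ x) ≤ x ⬝ᵥ A *ᵥ x) {k : Fin (Fintype.card n)}
    (hk : k < finrank ℝ S) : c ≤ hA.eigenvalues₀ k := by
  rw [← Fin.lt_card_filter_univ_iff_apply_of_imp (fun j => c ≤ hA.eigenvalues₀ j)
    fun i j hji hi => hi.trans (hA.eigenvalues₀_antitone hji), ← hA.card_filter_eigenvalues (c ≤ ·)]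
  exact hk.trans_le (hA.finrank_le_card_le_eigenvalues hS)

lemma eigenvalues₀_le (hS : ∀ x ∈ S, x ⬝ᵥ A *ᵥ x ≤ c * (x ⬝ᵥ x)) {k : Fin (Fintype.card n)}
    (hk : Fintype.card n - finrank ℝ S ≤ k) : hA.eigenvalues₀ k ≤ c := by
  have hcard : #{j | hA.eigenvalues₀ (Fin.rev j) ≤ c} = #{j | hA.eigenvalues₀ j ≤ c} :=
    card_equiv Fin.revPerm (by simp)
  have hrev := (Fin.lt_card_filter_univ_iff_apply_of_imp (j := k.rev)
    (fun j => hA.eigenvalues₀ (Fin.rev j) ≤ c)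
    fun i j hji hi => (hA.eigenvalues₀_antitone (Fin.rev_le_rev.mpr hji)).trans hi).mp
  rw [Fin.rev_rev] at hrev
  apply hrev
  rw [hcard, ← hA.card_filter_eigenvalues (· ≤ c), Fin.val_rev]
  have := hA.finrank_le_card_eigenvalues_le hS
  omega

end Matrix.IsHermitian

section Eigval

variable {N : ℕ} (G : SimpleGraph (Fin N))

lemma specMS_eq_map_roots_charpoly : specMS G = (adjMatR G).charpoly.roots.map RCLike.re := by
  rw [(adjMatR_isHermitian G).roots_charpoly_eq_eigenvalues, Multiset.map_map]
  rfl

lemma eigval_eq_eigenvalues₀ (k : Fin (Fintype.card (Fin N))) :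
    eigval G k = (adjMatR_isHermitian G).eigenvalues₀ k := by
  rw [eigval, specMS_eq_map_roots_charpoly,
    (adjMatR_isHermitian G).sort_roots_charpoly_eq_eigenvalues₀,
    List.getD_eq_getElem _ _ (by simpa using k.isLt), List.getElem_ofFn]

variable {G} {S : Submodule ℝ (Fin N → ℝ)} {c : ℝ} {k : ℕ}

lemma le_eigval_of_forall (hS : ∀ x ∈ S, c * (x ⬝ᵥ x) ≤ x ⬝ᵥ adjMatR G *ᵥ x)
    (hk : k < finrank ℝ S) : c ≤ eigval G k := by
  have hkN : k < Fintype.card (Fin N) := hk.trans_le (by simpa using S.finrank_le)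
  rw [show k = (⟨k, hkN⟩ : Fin _) from rfl, eigval_eq_eigenvalues₀]
  exact (adjMatR_isHermitian G).le_eigenvalues₀ hS hk

lemma eigval_le_of_forall (hS : ∀ x ∈ S, x ⬝ᵥ adjMatR G *ᵥ x ≤ c * (x ⬝ᵥ x))
    (hk : N - finrank ℝ S ≤ k) (hkN : k < N) : eigval G k ≤ c := by
  have hkN' : k < Fintype.card (Fin N) := by simpa using hkN
  rw [show k = (⟨k, hkN'⟩ : Fin _) from rfl, eigval_eq_eigenvalues₀]
  exact (adjMatR_isHermitian G).eigenvalues₀_le hS (by simpa using hk)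

lemma abs_eigval_sub_le_specDist (H : SimpleGraph (Fin N)) (hk : k < N) :
    |eigval G k - eigval H k| ≤ specDist G H :=
  single_le_sum (f := fun j => |eigval G j - eigval H j|) (fun _ _ => abs_nonneg _)
    (mem_range.mpr hk)

end Eigval

section ExtendByZero

variable {ι V : Type*} [Fintype ι] [Fintype V] {s : ι → V}

lemma sum_extend_zero_mul (hs : Function.Injective s) (y : ι → ℝ) (g : V → ℝ) :
    ∑ v, Function.extend s y 0 v * g v = ∑ i, y i * g (s i) := by
  classical
  rw [← sum_subset (subset_univ (univ.image s)) fun v _ hv => ?_,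
    sum_image fun i _ j _ h => hs h]
  · simp [hs.extend_apply]
  · rw [Function.extend_apply' _ _ _ (by simpa using hv), Pi.zero_apply, zero_mul]

lemma extend_dotProduct_extend (hs : Function.Injective s) (y : ι → ℝ) :
    Function.extend s y 0 ⬝ᵥ Function.extend s y 0 = y ⬝ᵥ y := by
  simp [dotProduct, sum_extend_zero_mul hs, hs.extend_apply]

lemma extend_dotProduct_mulVec_extend (hs : Function.Injective s) (A : Matrix V V ℝ)
    (y : ι → ℝ) :
    Function.extend s y 0 ⬝ᵥ A *ᵥ Function.extend s y 0 = y ⬝ᵥ A.submatrix s s *ᵥ y := by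
  simp only [dotProduct, mulVec, submatrix_apply]
  simp_rw [sum_extend_zero_mul hs, mul_comm (A _ _) (Function.extend _ _ _ _),
    sum_extend_zero_mul hs, mul_comm (y _) (A _ _)]

end ExtendByZero

section InducedSubgraph

variable {N : ℕ} {G : SimpleGraph (Fin N)} {W : Type*} {H : SimpleGraph W} [DecidableRel H.Adj]

lemma adjMatR_submatrix (f : H ↪g G) : (adjMatR G).submatrix f f = H.adjMatrix ℝ := by
  ext i j
  simp [adjMatR, adjMatrix_apply]

variable [Fintype W] {S : Submodule ℝ (W → ℝ)} {c : ℝ} {k : ℕ}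

lemma le_eigval_of_embedding (f : H ↪g G)
    (hS : ∀ y ∈ S, c * (y ⬝ᵥ y) ≤ y ⬝ᵥ H.adjMatrix ℝ *ᵥ y) (hk : k < finrank ℝ S) :
    c ≤ eigval G k := by
  have hL := Function.extend_injective f.injective (0 : Fin N → ℝ)
  refine le_eigval_of_forall (S := S.map (Function.ExtendByZero.linearMap ℝ f)) ?_
    (by rwa [← (Submodule.equivMapOfInjective _ hL S).finrank_eq])
  rintro _ ⟨y, hy, rfl⟩
  change c * (Function.extend f y 0 ⬝ᵥ Function.extend f y 0)
    ≤ Function.extend f y 0 ⬝ᵥ adjMatR G *ᵥ Function.extend f y 0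
  rw [extend_dotProduct_extend f.injective, extend_dotProduct_mulVec_extend f.injective,
    adjMatR_submatrix]
  exact hS y hy

lemma eigval_le_of_embedding (f : H ↪g G)
    (hS : ∀ y ∈ S, y ⬝ᵥ H.adjMatrix ℝ *ᵥ y ≤ c * (y ⬝ᵥ y)) (hk : N - finrank ℝ S ≤ k)
    (hkN : k < N) : eigval G k ≤ c := by
  have hL := Function.extend_injective f.injective (0 : Fin N → ℝ)
  refine eigval_le_of_forall (S := S.map (Function.ExtendByZero.linearMap ℝ f)) ?_
    (by rwa [← (Submodule.equivMapOfInjective _ hL S).finrank_eq]) hkN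
  rintro _ ⟨y, hy, rfl⟩
  change Function.extend f y 0 ⬝ᵥ adjMatR G *ᵥ Function.extend f y 0
    ≤ c * (Function.extend f y 0 ⬝ᵥ Function.extend f y 0)
  rw [extend_dotProduct_extend f.injective, extend_dotProduct_mulVec_extend f.injective,
    adjMatR_submatrix]
  exact hS y hy

end InducedSubgraph

lemma finrank_span_pair_eq_two {V : Type*} [AddCommGroup V] [Module ℝ V] {u v : V}
    (h : LinearIndependent ℝ ![u, v]) : finrank ℝ (Submodule.span ℝ {u, v}) = 2 := by
  rw [← Matrix.range_cons_cons_empty, finrank_span_eq_card h, Fintype.card_fin]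

section SmallInducedSubgraphs

variable {N : ℕ} {G : SimpleGraph (Fin N)}

lemma one_le_eigval_zero_of_ne_bot (hG : G ≠ ⊥) : 1 ≤ eigval G 0 := by
  have f := topEmbeddingOfNotCliqueFree (cliqueFree_two.not.mpr hG)
  refine le_eigval_of_embedding f (S := Submodule.span ℝ {![1, 1]}) ?_
    (by rw [finrank_span_singleton (by simp)]; omega)
  intro y hy
  obtain ⟨a, rfl⟩ := Submodule.mem_span_singleton.mp hy
  simp [dotProduct, mulVec, Fin.sum_univ_two, adjMatrix_apply]

lemma eigval_sub_two_le_neg_one_of_not_cliqueFree (hG : ¬ G.CliqueFree 3) :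
    eigval G (N - 2) ≤ -1 := by
  have f := topEmbeddingOfNotCliqueFree hG
  have hN : 3 ≤ N := by simpa using Fintype.card_le_of_injective f f.injective
  have hli : LinearIndependent ℝ ![![1, -1, 0], ![(1 : ℝ), 1, -2]] := by
    refine LinearIndependent.pair_iff.mpr fun s t h => ?_
    have h0 := congrFun h 0
    have h2 := congrFun h 2
    simp only [Pi.add_apply, Pi.smul_apply, smul_eq_mul, Matrix.cons_val, Pi.zero_apply] at h0 h2
    constructor <;> linarith
  refine eigval_le_of_embedding f (S := Submodule.span ℝ {![1, -1, 0], ![1, 1, -2]}) ?_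
    (by rw [finrank_span_pair_eq_two hli]) (by omega)
  intro y hy
  obtain ⟨a, b, rfl⟩ := Submodule.mem_span_pair.mp hy
  -- these vectors sum to zero, where the form of `K₃` is `(∑ y)² - y ⬝ᵥ y = -(y ⬝ᵥ y)`
  simp +decide only [dotProduct, mulVec, Fin.sum_univ_three, adjMatrix_apply,
    completeGraph_eq_top, top_adj, Pi.add_apply, Pi.smul_apply, smul_eq_mul, Matrix.cons_val,
    if_true, if_false]
  nlinarith

lemma half_le_eigval_one_of_induced_pathGraph_four (hG : pathGraph 4 ⊴ G) :
    1 / 2 ≤ eigval G 1 := by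
  classical
  obtain ⟨f⟩ := hG
  have hli : LinearIndependent ℝ ![![1, 2, 2, 1], ![(1 : ℝ), 1, -1, -1]] := by
    refine LinearIndependent.pair_iff.mpr fun s t h => ?_
    have h0 := congrFun h 0
    have h2 := congrFun h 2
    simp only [Pi.add_apply, Pi.smul_apply, smul_eq_mul, Matrix.cons_val, Pi.zero_apply] at h0 h2
    constructor <;> linarith
  refine le_eigval_of_embedding f (S := Submodule.span ℝ {![1, 2, 2, 1], ![1, 1, -1, -1]}) ?_
    (by rw [finrank_span_pair_eq_two hli]; omega)
  intro y hy
  obtain ⟨a, b, rfl⟩ := Submodule.mem_span_pair.mp hy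
  -- the form is `16a² + 2b²` and the norm `10a² + 4b²`
  simp +decide only [dotProduct, mulVec, Fin.sum_univ_four, adjMatrix_apply, pathGraph_adj,
    Pi.add_apply, Pi.smul_apply, smul_eq_mul, Matrix.cons_val, if_true, if_false]
  nlinarith [sq_nonneg a]

lemma one_le_eigval_one_of_induced_top_sum_top
    (hG : (⊤ : SimpleGraph (Fin 2)) ⊕g (⊤ : SimpleGraph (Fin 2)) ⊴ G) : 1 ≤ eigval G 1 := by
  classical
  obtain ⟨f⟩ := hG
  let u : Fin 2 ⊕ Fin 2 → ℝ := Sum.elim 1 0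
  let v : Fin 2 ⊕ Fin 2 → ℝ := Sum.elim 0 1
  have hli : LinearIndependent ℝ ![u, v] := by
    refine LinearIndependent.pair_iff.mpr fun s t h => ?_
    have h0 := congrFun h (.inl 0)
    have h1 := congrFun h (.inr 0)
    simpa [u, v] using And.intro h0 h1
  refine le_eigval_of_embedding f (S := Submodule.span ℝ {u, v}) ?_
    (by rw [finrank_span_pair_eq_two hli]; omega)
  intro y hy
  obtain ⟨a, b, rfl⟩ := Submodule.mem_span_pair.mp hy
  simp +decide only [u, v, dotProduct, mulVec, Fintype.sum_sum_type, Fin.sum_univ_two,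
    adjMatrix_apply, sum_adj, top_adj, Pi.add_apply, Pi.smul_apply, smul_eq_mul, Sum.elim_inl,
    Sum.elim_inr, Pi.one_apply, Pi.zero_apply, if_true, if_false]
  nlinarith

end SmallInducedSubgraphs

lemma eigval_bot_nonpos {N k : ℕ} (hk : k < N) : eigval (⊥ : SimpleGraph (Fin N)) k ≤ 0 := by
  have h0 : adjMatR (⊥ : SimpleGraph (Fin N)) = 0 := by
    ext
    simp [adjMatR, adjMatrix_apply]
  exact eigval_le_of_forall (S := ⊤) (fun x _ => by simp [h0]) (by simp) hk

lemma compBip_ne_bot {m n : ℕ} (hm : 0 < m) (hn : 0 < n) : compBip m n ≠ ⊥ :=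
  ne_bot_iff_exists_adj.mpr ⟨⟨0, by omega⟩, ⟨m, by omega⟩, by simp [compBip, hm.ne, hm]⟩

lemma eigval_compBip_nonneg {m n k : ℕ} (hk : k + 1 < m + n) : 0 ≤ eigval (compBip m n) k := by
  let u : Fin (m + n) → ℝ := fun i => if (i : ℕ) < m then 1 else 0
  let v : Fin (m + n) → ℝ := fun i => if (i : ℕ) < m then 0 else 1
  have hA : adjMatR (compBip m n) = vecMulVec u v + vecMulVec v u := by
    ext i j
    simp only [adjMatR, adjMatrix_apply, Matrix.add_apply, vecMulVec_apply, u, v]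
    simp only [compBip, fromRel_adj, ← Fin.val_ne_iff]
    split_ifs <;> first | (exfalso; omega) | norm_num
  let f := dotProductEquiv ℝ (Fin (m + n)) u
  have hker : m + n ≤ finrank ℝ (LinearMap.ker f) + 1 := by
    have := LinearMap.finrank_range_add_finrank_ker f
    have := Submodule.finrank_le (LinearMap.range f)
    simp only [finrank_self, finrank_fin_fun] at *
    omega
  refine le_eigval_of_forall (S := LinearMap.ker f) (fun x hx => ?_) (by omega)
  have hux : u ⬝ᵥ x = 0 := hx
  simp [hA, add_mulVec, vecMulVec_mulVec, dotProduct_comm x u, hux]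

section Classification

variable {V : Type*} {G : SimpleGraph V}

lemma pathGraph_four_isIndContained_of_adj {a b c d : V} (hab : G.Adj a b) (hbc : G.Adj b c)
    (hcd : G.Adj c d) (hac : ¬ G.Adj a c) (had : ¬ G.Adj a d) (hbd : ¬ G.Adj b d) :
    pathGraph 4 ⊴ G := by
  have hca : ¬ G.Adj c a := fun h => hac h.symm
  have hda : ¬ G.Adj d a := fun h => had h.symm
  have hdb : ¬ G.Adj d b := fun h => hbd h.symm
  refine ⟨⟨⟨![a, b, c, d], fun i j hij => ?_⟩, fun {i j} => ?_⟩⟩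
  · fin_cases i <;> fin_cases j <;> simp_all
  · change G.Adj (![a, b, c, d] i) (![a, b, c, d] j) ↔ _
    fin_cases i <;> fin_cases j <;> simp [pathGraph_adj, *, hab.symm, hbc.symm, hcd.symm]

lemma top_sum_top_isIndContained_of_adj {a b c d : V} (hab : G.Adj a b) (hcd : G.Adj c d)
    (hac : ¬ G.Adj a c) (had : ¬ G.Adj a d) (hbc : ¬ G.Adj b c) (hbd : ¬ G.Adj b d) :
    (⊤ : SimpleGraph (Fin 2)) ⊕g (⊤ : SimpleGraph (Fin 2)) ⊴ G := by
  have hca : ¬ G.Adj c a := fun h => hac h.symm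
  have hda : ¬ G.Adj d a := fun h => had h.symm
  have hcb : ¬ G.Adj c b := fun h => hbc h.symm
  have hdb : ¬ G.Adj d b := fun h => hbd h.symm
  refine ⟨⟨⟨Sum.elim ![a, b] ![c, d], fun i j hij => ?_⟩, fun {i j} => ?_⟩⟩
  · rcases i with i | i <;> rcases j with j | j <;> fin_cases i <;> fin_cases j <;> simp_all
  · change G.Adj (Sum.elim ![a, b] ![c, d] i) (Sum.elim ![a, b] ![c, d] j) ↔ _
    rcases i with i | i <;> rcases j with j | j <;> fin_cases i <;> fin_cases j <;>
      simp [*, hab.symm, hcd.symm]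

lemma adj_iff_of_cliqueFree_of_not_isIndContained {a b : V} (hab : G.Adj a b)
    (h3 : G.CliqueFree 3) (hP : ¬ pathGraph 4 ⊴ G)
    (h2 : ¬ (⊤ : SimpleGraph (Fin 2)) ⊕g (⊤ : SimpleGraph (Fin 2)) ⊴ G) (u v : V) :
    G.Adj u v ↔ (G.Adj a u ∧ ¬ G.Adj a v ∧ G.Adj b v) ∨ (G.Adj a v ∧ ¬ G.Adj a u ∧ G.Adj b u) := by
  classical
  have hT : ∀ {x y z}, G.Adj x y → G.Adj x z → ¬ G.Adj y z := fun hxy hxz hyz =>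
    h3 _ (is3Clique_triple_iff.mpr ⟨hxy, hxz, hyz⟩)
  have across : ∀ {x y}, G.Adj x y → G.Adj a x → ¬ G.Adj a y ∧ G.Adj b y := by
    intro x y hxy hax
    have hay : ¬ G.Adj a y := fun hay => hT hax hay hxy
    refine ⟨hay, by_contra fun hby => hP ?_⟩
    exact pathGraph_four_isIndContained_of_adj hxy.symm hax.symm hab (fun h => hay h.symm)
      (fun h => hby h.symm) (hT hax hab)
  have meets : ∀ {x y}, G.Adj x y → G.Adj a x ∨ G.Adj a y := by
    intro x y hxy
    by_contra! ⟨hax, hay⟩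
    by_cases hbx : G.Adj b x
    · exact hP (pathGraph_four_isIndContained_of_adj hxy.symm hbx.symm hab.symm
        (fun h => hT hbx h.symm hxy) (fun h => hay h.symm) (fun h => hax h.symm))
    by_cases hby : G.Adj b y
    · exact hP (pathGraph_four_isIndContained_of_adj hxy hby.symm hab.symm
        (fun h => hT hby h.symm hxy.symm) (fun h => hax h.symm) (fun h => hay h.symm))
    exact h2 (top_sum_top_isIndContained_of_adj hab hxy hax hay hbx hby)
  have join : ∀ {x y}, G.Adj a x → ¬ G.Adj a y → G.Adj b y → G.Adj x y := by
    intro x y hax hay hby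
    by_contra hxy
    exact hP (pathGraph_four_isIndContained_of_adj hax.symm hab hby (hT hax hab) hxy hay)
  constructor
  · intro huv
    rcases meets huv with hau | hav
    · exact .inl ⟨hau, across huv hau⟩
    · exact .inr ⟨hav, across huv.symm hav⟩
  · rintro (⟨hau, hav, hbv⟩ | ⟨hav, hau, hbu⟩)
    · exact join hau hav hbv
    · exact (join hav hau hbu).symm

end Classification

lemma nonempty_iso_comap_of_card_fiber_eq {V W L : Type*} [Fintype V] [Fintype W] [DecidableEq L]
    (K : SimpleGraph L) {f : V → L} {g : W → L}
    (h : ∀ l, Fintype.card {v // f v = l} = Fintype.card {w // g w = l}) :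
    Nonempty (K.comap f ≃g K.comap g) := by
  refine ⟨⟨Equiv.ofFiberEquiv fun l => Fintype.equivOfCardEq (h l), fun {u v} => ?_⟩⟩
  simp only [comap_adj, Equiv.ofFiberEquiv_map]

/-- `K_{r,s} + tK_1` is the blow-up of `K_{1,1} + K_1 = compBipPlus 1 1 1` along this map. -/
def compBipPlusPart (r s t : ℕ) (p : Fin (r + s + t)) : Fin 3 :=
  if (p : ℕ) < r then 0 else if (p : ℕ) < r + s then 1 else 2

lemma compBipPlus_eq_comap (r s t : ℕ) :
    compBipPlus r s t = (compBipPlus 1 1 1).comap (compBipPlusPart r s t) := by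
  ext p q
  simp only [comap_adj, compBipPlusPart]
  rw [compBipPlus, compBipPlus, fromRel_adj, fromRel_adj, ← Fin.val_ne_iff]
  split_ifs <;> simp <;> omega

lemma card_compBipPlusPart_fiber (r s t : ℕ) (l : Fin 3) :
    Fintype.card {p // compBipPlusPart r s t p = l} = ![r, s, t] l := by
  have hfib : ∀ i, (∃ p, compBipPlusPart r s t p = l ∧ Fin.valEmbedding p = i) ↔
      ![0, r, r + s] l ≤ i ∧ i < ![r, r + s, r + s + t] l := by
    intro i
    simp only [Fin.valEmbedding_apply, compBipPlusPart, Fin.exists_iff, exists_and_right,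
      exists_eq_right]
    fin_cases l <;> by_cases h1 : i < r <;> by_cases h2 : i < r + s <;> simp [h1, h2] <;> omega
  rw [Fintype.card_subtype, ← card_map Fin.valEmbedding, map_filter', Fin.map_valEmbedding_univ,
    show {i ∈ Iio (r + s + t) | _} = Ico (![0, r, r + s] l) (![r, r + s, r + s + t] l) by
      ext i; simp only [mem_filter, mem_Iio, mem_Ico, hfib]; fin_cases l <;> simp <;> omega,
    Nat.card_Ico]
  fin_cases l <;> simp

theorem exists_iso_compBipPlus {V : Type*} [Fintype V] {G : SimpleGraph V} (hG : G ≠ ⊥)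
    (h3 : G.CliqueFree 3) (hP : ¬ pathGraph 4 ⊴ G)
    (h2 : ¬ (⊤ : SimpleGraph (Fin 2)) ⊕g (⊤ : SimpleGraph (Fin 2)) ⊴ G) :
    ∃ r s t : ℕ, 0 < r ∧ 0 < s ∧ Nonempty (G ≃g compBipPlus r s t) := by
  classical
  obtain ⟨a, b, hab⟩ := ne_bot_iff_exists_adj.mp hG
  let part : V → Fin 3 := fun v => if G.Adj a v then 0 else if G.Adj b v then 1 else 2
  have hcomap : G = (compBipPlus 1 1 1).comap part := by
    ext u v
    rw [comap_adj, adj_iff_of_cliqueFree_of_not_isIndContained hab h3 hP h2]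
    simp only [part]
    split_ifs <;> simp_all [compBipPlus]
  refine ⟨Fintype.card {v // part v = 0}, Fintype.card {v // part v = 1},
    Fintype.card {v // part v = 2}, Fintype.card_pos_iff.mpr ⟨⟨b, by simp [part, hab]⟩⟩,
    Fintype.card_pos_iff.mpr ⟨⟨a, by simp [part, hab.symm]⟩⟩, ?_⟩
  rw [compBipPlus_eq_comap, hcomap]
  exact nonempty_iso_comap_of_card_fiber_eq _ fun l => by
    rw [card_compBipPlusPart_fiber]
    fin_cases l <;> rfl

theorem specDist_ge_one_of_not_bip (m n : ℕ) (hm : 0 < m) (hn : 0 < n)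
    (G : SimpleGraph (Fin (m + n)))
    (hG : ¬ ∃ r s t : ℕ, 0 < r ∧ 0 < s ∧ Nonempty (G ≃g compBipPlus r s t))
    (hl : eigval G 1 ≤ Real.sqrt 2 - 1) :
    1 ≤ specDist G (compBip m n) := by
  have hsqrt : Real.sqrt 2 - 1 < 1 / 2 := by
    nlinarith [Real.sq_sqrt (show (0 : ℝ) ≤ 2 by norm_num), Real.sqrt_nonneg 2]
  obtain rfl | hbot := eq_or_ne G ⊥
  · have h0 := eigval_bot_nonpos (N := m + n) (k := 0) (by omega)
    have h1 := one_le_eigval_zero_of_ne_bot (compBip_ne_bot hm hn)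
    calc (1 : ℝ) ≤ |eigval ⊥ 0 - eigval (compBip m n) 0| := le_abs.mpr (.inr (by linarith))
      _ ≤ _ := abs_eigval_sub_le_specDist _ (by omega)
  by_cases h3 : G.CliqueFree 3
  · refine absurd (exists_iso_compBipPlus hbot h3 (fun hP => ?_) (fun h2 => ?_)) hG
    · linarith [half_le_eigval_one_of_induced_pathGraph_four hP]
    · linarith [one_le_eigval_one_of_induced_top_sum_top h2]
  · have h1 := eigval_sub_two_le_neg_one_of_not_cliqueFree h3
    have h2 := eigval_compBip_nonneg (m := m) (n := n) (k := m + n - 2) (by omega)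
    calc (1 : ℝ) ≤ |eigval G (m + n - 2) - eigval (compBip m n) (m + n - 2)| :=
          le_abs.mpr (.inr (by linarith))
      _ ≤ _ := abs_eigval_sub_le_specDist _ (by omega)
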